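/- Let A : ℝ⁷ → ℝ⁷ be a linear map with A ∘ A = id and A*φ₀ = −φ₀. Then either A = −id, or the fixed subspace ker(A − id) is 4-dimensional and φ₀(u,v,w) = 0 for all u, v, w ∈ ker(A − id), i.e., the fixed subspace is a coassociative 4-plane. (This is the linear model behind the fact that each connected component of the fixed point set of an isometric involution σ of a G₂-manifold with σ*φ = −φ is either a coassociative 4-fold or a single point.) -/

import Mathlib

open scoped RealInnerProductSpace

noncomputable section

/-- ℝ⁷ with its standard Euclidean inner product. -/
abbrev E7 := EuclideanSpace ℝ (Fin 7)

/-- The coordinate 3-form dx_i ∧ dx_j ∧ dx_k on ℝ⁷ (indices 0,…,6 for x₁,…,x₇). -/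
def tri7 (i j k : Fin 7) (u v w : E7) : ℝ :=
  Matrix.det !![u i, u j, u k; v i, v j, v k; w i, w j, w k]

/-- The G₂ 3-form φ₀ = dx₁₂₃ + dx₁₄₅ + dx₁₆₇ + dx₂₄₆ − dx₂₅₇ − dx₃₄₇ − dx₃₅₆. -/
def phi0 (u v w : E7) : ℝ :=
  tri7 0 1 2 u v w + tri7 0 3 4 u v w + tri7 0 5 6 u v w + tri7 1 3 5 u v w
    - tri7 1 4 6 u v w - tri7 2 3 6 u v w - tri7 2 4 5 u v w

namespace G2A

/-- The seven-dimensional cross product associated to φ₀. -/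
def cross (u v : E7) : E7 := WithLp.toLp 2 fun (i : Fin 7) =>
  if i = 0 then u 1*v 2 - u 2*v 1 + (u 3*v 4 - u 4*v 3) + (u 5*v 6 - u 6*v 5) else
  if i = 1 then -(u 0*v 2 - u 2*v 0) + (u 3*v 5 - u 5*v 3) - (u 4*v 6 - u 6*v 4) else
  if i = 2 then (u 0*v 1 - u 1*v 0) - (u 3*v 6 - u 6*v 3) - (u 4*v 5 - u 5*v 4) else
  if i = 3 then -(u 0*v 4 - u 4*v 0) - (u 1*v 5 - u 5*v 1) + (u 2*v 6 - u 6*v 2) else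
  if i = 4 then (u 0*v 3 - u 3*v 0) + (u 1*v 6 - u 6*v 1) + (u 2*v 5 - u 5*v 2) else
  if i = 5 then -(u 0*v 6 - u 6*v 0) + (u 1*v 3 - u 3*v 1) - (u 2*v 4 - u 4*v 2) else
  (u 0*v 5 - u 5*v 0) - (u 1*v 4 - u 4*v 1) - (u 2*v 3 - u 3*v 2)

lemma inner_expand (x y : E7) : ⟪x, y⟫ = ∑ i, x i * y i := by
  simp [PiLp.inner_apply, RCLike.inner_apply, conj_trivial]
  exact Finset.sum_congr rfl fun i _ => mul_comm _ _

lemma phi0_eq_inner (u v w : E7) : phi0 u v w = ⟪cross u v, w⟫ := by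
  simp only [phi0, tri7, Matrix.det_fin_three, inner_expand, Fin.sum_univ_seven]
  simp [cross]
  ring

lemma lagrange (u v : E7) : ⟪cross u v, cross u v⟫ = ⟪u,u⟫*⟪v,v⟫ - ⟪u,v⟫^2 := by
  simp only [inner_expand, Fin.sum_univ_seven]
  simp [cross]
  ring

lemma cross_self_eq_zero (u : E7) : cross u u = 0 := by
  ext i
  have h0 : (0 : E7) i = 0 := rfl
  rw [h0]
  simp only [cross, PiLp.toLp_apply]
  split_ifs <;> ring

lemma cross_add_right (a v w : E7) : cross a (v + w) = cross a v + cross a w := by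
  ext i
  simp only [cross, PiLp.add_apply, Pi.add_apply, PiLp.toLp_apply]
  split_ifs <;> ring

lemma cross_smul_right (a : E7) (r : ℝ) (v : E7) : cross a (r • v) = r • cross a v := by
  ext i
  simp only [cross, PiLp.smul_apply, Pi.smul_apply, smul_eq_mul, PiLp.toLp_apply]
  split_ifs <;> ring

set_option maxHeartbeats 1000000 in
lemma phi0_cyc (u v w : E7) : phi0 u v w = phi0 v w u := by
  rw [phi0_eq_inner, phi0_eq_inner]
  simp only [inner_expand, Fin.sum_univ_seven]
  simp [cross]
  ring

set_option maxHeartbeats 1000000 in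
lemma phi0_aya (a y : E7) : phi0 a y a = 0 := by
  rw [phi0_eq_inner]
  simp only [inner_expand, Fin.sum_univ_seven]
  simp [cross]
  ring

set_option maxHeartbeats 1000000 in
lemma phi0_neg_neg (u v w : E7) : phi0 (-u) (-v) w = phi0 u v w := by
  rw [phi0_eq_inner, phi0_eq_inner]
  simp only [inner_expand, Fin.sum_univ_seven]
  simp [cross, PiLp.neg_apply, Pi.neg_apply]
  try ring

/-- Cross product with a fixed vector, as a linear map. -/
def La (a : E7) : E7 →ₗ[ℝ] E7 :=
  { toFun := cross a
    map_add' := cross_add_right a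
    map_smul' := cross_smul_right a }

lemma La_apply (a y : E7) : La a y = cross a y := rfl

lemma cross_eq_zero_imp {a y : E7} (ha : a ≠ 0) (h : cross a y = 0) :
    ∃ r : ℝ, y = r • a := by
  have hl := lagrange a y
  rw [h, inner_zero_left] at hl
  have haa : (⟪a,a⟫ : ℝ) ≠ 0 := inner_self_ne_zero.mpr ha
  set t : ℝ := ⟪a,y⟫ / ⟪a,a⟫ with ht
  refine ⟨t, ?_⟩
  have hexp : ⟪y - t • a, y - t • a⟫ = ⟪y,y⟫ - 2*t*⟪a,y⟫ + t^2*⟪a,a⟫ := by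
    simp only [inner_sub_left, inner_sub_right, real_inner_smul_left,
      real_inner_smul_right, real_inner_comm a y]
    ring
  have key : ∀ α β γ : ℝ, α ≠ 0 → 0 = α*γ - β^2 →
      γ - 2*(β/α)*β + (β/α)^2*α = 0 := by
    intro α β γ hα h
    field_simp
    nlinarith [h]
  have hz : ⟪y - t • a, y - t • a⟫ = 0 := by
    rw [hexp, ht]
    exact key ⟪a,a⟫ ⟪a,y⟫ ⟪y,y⟫ haa hl
  have hz2 : y - t • a = 0 := inner_self_eq_zero.mp hz
  have := sub_eq_zero.mp hz2
  exact this

end G2A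

open G2A Submodule Module

/-- If A : ℝ⁷ → ℝ⁷ is a linear involution with A*φ₀ = −φ₀, then either A = −id, or the fixed
subspace of A is a coassociative 4-plane: it is 4-dimensional and φ₀ vanishes on it. -/
theorem fixed_set_of_antiinvolution_coassociative
    (A : E7 →ₗ[ℝ] E7) (h2 : A ∘ₗ A = LinearMap.id)
    (hphi : ∀ u v w : E7, phi0 (A u) (A v) (A w) = - phi0 u v w) :
    A = - LinearMap.id ∨
    (Module.finrank ℝ (LinearMap.ker (A - LinearMap.id)) = 4 ∧
      ∀ u v w : E7, u ∈ LinearMap.ker (A - LinearMap.id) →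
        v ∈ LinearMap.ker (A - LinearMap.id) →
        w ∈ LinearMap.ker (A - LinearMap.id) → phi0 u v w = 0) := by
  classical
  set F := LinearMap.ker (A - LinearMap.id) with hFdef
  set G := LinearMap.ker (A + LinearMap.id) with hGdef
  have hAA : ∀ x : E7, A (A x) = x := fun x => by
    simpa using DFunLike.congr_fun h2 x
  have hAF : ∀ x ∈ F, A x = x := by
    intro x hx
    have := LinearMap.mem_ker.mp hx
    rw [LinearMap.sub_apply, LinearMap.id_apply, sub_eq_zero] at this
    exact this
  have hAG : ∀ x ∈ G, A x = -x := by
    intro x hx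
    have := LinearMap.mem_ker.mp hx
    rw [LinearMap.add_apply, LinearMap.id_apply, add_eq_zero_iff_eq_neg] at this
    exact this
  have hsup : F ⊔ G = ⊤ := by
    rw [eq_top_iff]
    intro x _
    have h1 : (2:ℝ)⁻¹ • (x + A x) ∈ F := by
      rw [LinearMap.mem_ker, LinearMap.sub_apply, LinearMap.id_apply, map_smul, map_add, hAA]
      module
    have hg1 : (2:ℝ)⁻¹ • (x - A x) ∈ G := by
      rw [LinearMap.mem_ker, LinearMap.add_apply, LinearMap.id_apply, map_smul, map_sub, hAA]
      module
    have hx : x = (2:ℝ)⁻¹ • (x + A x) + (2:ℝ)⁻¹ • (x - A x) := by module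
    rw [hx]
    exact Submodule.add_mem_sup h1 hg1
  have hinf : F ⊓ G = ⊥ := by
    rw [eq_bot_iff]
    rintro x ⟨hxF, hxG⟩
    have h1 := hAF x hxF
    have h2' := hAG x hxG
    have hxx : x = -x := h1.symm.trans h2'
    have hx0 : x = 0 := by
      have h3 : x + x = 0 := by nth_rewrite 2 [hxx]; abel
      have h4 : (2:ℝ) • x = 0 := by rw [two_smul]; exact h3
      simpa using (smul_eq_zero.mp h4).resolve_left (by norm_num)
    simp [hx0]
  have hdim : finrank ℝ F + finrank ℝ G = 7 := by
    have h := Submodule.finrank_sup_add_finrank_inf_eq F G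
    rw [hsup, hinf] at h
    simpa [finrank_top, finrank_euclideanSpace_fin] using h.symm
  have hphiF : ∀ u v w : E7, u ∈ F → v ∈ F → w ∈ F → phi0 u v w = 0 := by
    intro u v w hu hv hw
    have h := hphi u v w
    rw [hAF u hu, hAF v hv, hAF w hw] at h
    linarith
  have hphiGGF : ∀ u v w : E7, u ∈ G → v ∈ G → w ∈ F → phi0 u v w = 0 := by
    intro u v w hu hv hw
    have h := hphi u v w
    rw [hAG u hu, hAG v hv, hAF w hw, phi0_neg_neg] at h
    linarith
  by_cases hbot : F = ⊥
  · left
    have hFrank : finrank ℝ F = 0 := by rw [hbot]; exact finrank_bot ℝ E7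
    have hGtop : G = ⊤ := by
      apply Submodule.eq_top_of_finrank_eq
      rw [finrank_euclideanSpace_fin]
      omega
    ext x
    have := hAG x (by rw [hGtop]; trivial)
    simp [this]
  · right
    obtain ⟨a, haF, ha0⟩ := Submodule.exists_mem_ne_zero_of_ne_bot hbot
    refine ⟨?_, hphiF⟩
    set L := La a with hLdef
    have hkerL : LinearMap.ker L = Submodule.span ℝ {a} := by
      ext y
      constructor
      · intro hy
        obtain ⟨r, rfl⟩ := cross_eq_zero_imp ha0 (LinearMap.mem_ker.mp hy)
        exact Submodule.smul_mem _ _ (Submodule.mem_span_singleton_self a)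
      · intro hy
        obtain ⟨r, rfl⟩ := Submodule.mem_span_singleton.mp hy
        rw [LinearMap.mem_ker, hLdef, La_apply, cross_smul_right, cross_self_eq_zero,
          smul_zero]
    have hLrange : finrank ℝ (LinearMap.range L) = 6 := by
      have h1 := LinearMap.finrank_range_add_finrank_ker L
      rw [hkerL, finrank_span_singleton ha0, finrank_euclideanSpace_fin] at h1
      omega
    have haG : a ∉ G := by
      intro haG
      have h1 := hAF a haF
      have h2' := hAG a haG
      apply ha0
      have hxx : a = -a := h1.symm.trans h2'
      have h3 : (2:ℝ) • a = 0 := by rw [two_smul]; nth_rewrite 2 [hxx]; abel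
      simpa using (smul_eq_zero.mp h3).resolve_left (by norm_num)
    -- the two image bounds
    have hmapF : Submodule.map L F ≤ Fᗮ := by
      rintro _ ⟨y, hyF, rfl⟩
      rw [Submodule.mem_orthogonal]
      intro x hxF
      show ⟪x, cross a y⟫ = 0
      rw [real_inner_comm, ← phi0_eq_inner]
      exact hphiF a y x haF hyF hxF
    have hmapG : Submodule.map L G ≤ (G ⊔ Submodule.span ℝ {a})ᗮ := by
      rintro _ ⟨y, hyG, rfl⟩
      rw [Submodule.mem_orthogonal]
      intro x hx
      obtain ⟨g, hg, s, hs, rfl⟩ := Submodule.mem_sup.mp hx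
      obtain ⟨r, rfl⟩ := Submodule.mem_span_singleton.mp hs
      rw [inner_add_left, real_inner_smul_left]
      have e1 : ⟪g, L y⟫ = 0 := by
        show ⟪g, cross a y⟫ = 0
        rw [real_inner_comm, ← phi0_eq_inner, phi0_cyc]
        exact hphiGGF y g a hyG hg haF
      have e2 : ⟪a, L y⟫ = 0 := by
        show ⟪a, cross a y⟫ = 0
        rw [real_inner_comm, ← phi0_eq_inner, phi0_aya]
      rw [e1, e2]
      ring
    -- numeric bounds
    have hfF1 : finrank ℝ (Submodule.map L F) + 1 ≤ finrank ℝ F := by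
      have h1 := LinearMap.finrank_range_add_finrank_ker (L.domRestrict F)
      rw [LinearMap.range_domRestrict] at h1
      have hker : 0 < finrank ℝ (LinearMap.ker (L.domRestrict F)) := by
        rw [Module.finrank_pos_iff_exists_ne_zero]
        refine ⟨⟨⟨a, haF⟩, ?_⟩, ?_⟩
        · rw [LinearMap.mem_ker, LinearMap.domRestrict_apply]
          rw [hLdef, La_apply, cross_self_eq_zero]
        · intro hcon
          apply ha0
          have := Subtype.ext_iff.mp (Subtype.ext_iff.mp hcon)
          exact this
      omega
    have hfF2 : finrank ℝ (Submodule.map L F) ≤ finrank ℝ (Fᗮ) :=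
      Submodule.finrank_mono hmapF
    have hoF : finrank ℝ F + finrank ℝ (Fᗮ) = 7 := by
      have := Submodule.finrank_add_finrank_orthogonal F
      rwa [finrank_euclideanSpace_fin] at this
    have hfG1 : finrank ℝ (Submodule.map L G) ≤ finrank ℝ G :=
      Submodule.finrank_map_le L G
    have hfG2 : finrank ℝ (Submodule.map L G) ≤ finrank ℝ ((G ⊔ Submodule.span ℝ {a})ᗮ) :=
      Submodule.finrank_mono hmapG
    have hGa : finrank ℝ (G ⊔ Submodule.span ℝ {a} : Submodule ℝ E7) = finrank ℝ G + 1 := by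
      have h := Submodule.finrank_sup_add_finrank_inf_eq G (Submodule.span ℝ {a})
      have hinf2 : G ⊓ Submodule.span ℝ {a} = ⊥ := by
        rw [eq_bot_iff]
        rintro x ⟨hxG, hxs⟩
        obtain ⟨r, rfl⟩ := Submodule.mem_span_singleton.mp hxs
        rcases eq_or_ne r 0 with hr | hr
        · simp [hr]
        · exfalso
          apply haG
          have : r⁻¹ • (r • a) ∈ G := Submodule.smul_mem _ _ hxG
          rwa [smul_smul, inv_mul_cancel₀ hr, one_smul] at this
      rw [hinf2, finrank_span_singleton ha0] at h
      simpa using h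
    have hoGa : finrank ℝ (G ⊔ Submodule.span ℝ {a} : Submodule ℝ E7)
        + finrank ℝ ((G ⊔ Submodule.span ℝ {a})ᗮ) = 7 := by
      have := Submodule.finrank_add_finrank_orthogonal (G ⊔ Submodule.span ℝ {a})
      rwa [finrank_euclideanSpace_fin] at this
    have hrange : LinearMap.range L = Submodule.map L F ⊔ Submodule.map L G := by
      rw [LinearMap.range_eq_map, ← hsup, Submodule.map_sup]
    have h6 : 6 ≤ finrank ℝ (Submodule.map L F) + finrank ℝ (Submodule.map L G) := by
      have h := Submodule.finrank_sup_add_finrank_inf_eq (Submodule.map L F) (Submodule.map L G)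
      have h2' : finrank ℝ (Submodule.map L F ⊔ Submodule.map L G : Submodule ℝ E7) = 6 := by
        rw [← hrange]; exact hLrange
      omega
    omega
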